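/- arXiv:1606.05240 — 2 statements merged into one kernel-verified Lean document; each statement's English description precedes it below -/
import Mathlib

section
/- Let G be a finite connected graph, U ⊆ V with G[U] disconnected, and U₁ the vertex set of one connected component of G[U]. Then the total weight of edges between V\U and U₁ is strictly positive, and consequently w(δ(U\U₁)) < w(δ(U)); in particular δ(U) is not a w-minimum cut. -/
open scoped Classical

/-- The cut `δ(U)` of a simple graph: edges with exactly one endpoint in `U`. -/
noncomputable def cutE {V : Type} [Fintype V] [DecidableEq V] (G : SimpleGraph V)
    (U : Finset V) : Finset (Sym2 V) :=
  Finset.univ.filter (fun e => e ∈ G.edgeSet ∧ ∃ x ∈ U, ∃ y, y ∉ U ∧ e = s(x, y))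

/-- If `G[U]` is disconnected and `U₁` is a component of `G[U]`, then the total
weight of edges between `V \ U` and `U₁` is positive, `w(δ(U \ U₁)) < w(δ(U))`,
and `δ(U)` is not a `w`-minimum cut. -/
theorem stmt1 {V : Type} [Fintype V] [DecidableEq V] (G : SimpleGraph V)
    (hG : G.Connected) (w : Sym2 V → ℝ) (hw : ∀ e ∈ G.edgeSet, 0 < w e)
    (U U₁ : Finset V) (hUne : U.Nonempty) (hUproper : U ≠ Finset.univ)
    (hdisc : ¬ (G.induce (U : Set V)).Connected)
    (hsub : U₁ ⊆ U) (hne : U₁.Nonempty)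
    (hconn : (G.induce (U₁ : Set V)).Connected)
    (hcomp : ∀ x ∈ U₁, ∀ y ∈ U \ U₁, ¬ G.Adj x y) :
    0 < ∑ e ∈ Finset.univ.filter
        (fun e => e ∈ G.edgeSet ∧ ∃ x ∈ U₁, ∃ y, y ∉ U ∧ e = s(x, y)), w e ∧
    ∑ e ∈ cutE G (U \ U₁), w e < ∑ e ∈ cutE G U, w e ∧
    ∃ W : Finset V, W.Nonempty ∧ W ≠ Finset.univ ∧
      ∑ e ∈ cutE G W, w e < ∑ e ∈ cutE G U, w e := by
  classical
  obtain ⟨b, hb⟩ : ∃ b, b ∉ U := by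
    by_contra h; push_neg at h
    exact hUproper (Finset.eq_univ_iff_forall.2 h)
  obtain ⟨a, ha⟩ := hne
  obtain ⟨p⟩ := hG.preconnected a b
  obtain ⟨d, hd, hd1, hd2⟩ := p.exists_boundary_dart (↑U₁ : Set V)
    (by exact_mod_cast ha) (fun hb' => hb (hsub (by exact_mod_cast hb')))
  have hadj : G.Adj d.fst d.snd := d.adj
  have hfst : d.fst ∈ U₁ := by exact_mod_cast hd1
  have hsnd₁ : d.snd ∉ U₁ := by exact_mod_cast hd2
  have hsnd : d.snd ∉ U := fun h =>
    hcomp d.fst hfst d.snd (Finset.mem_sdiff.2 ⟨h, hsnd₁⟩) hadj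
  set e₀ : Sym2 V := s(d.fst, d.snd) with he₀def
  have he₀ : e₀ ∈ G.edgeSet := hadj
  -- part 1
  have hmem : e₀ ∈ Finset.univ.filter
      (fun e => e ∈ G.edgeSet ∧ ∃ x ∈ U₁, ∃ y, y ∉ U ∧ e = s(x, y)) :=
    Finset.mem_filter.2 ⟨Finset.mem_univ _, he₀, d.fst, hfst, d.snd, hsnd, rfl⟩
  have h1 : 0 < ∑ e ∈ Finset.univ.filter
      (fun e => e ∈ G.edgeSet ∧ ∃ x ∈ U₁, ∃ y, y ∉ U ∧ e = s(x, y)), w e :=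
    Finset.sum_pos (fun e he => hw e (Finset.mem_filter.1 he).2.1) ⟨e₀, hmem⟩
  -- subset
  have hAB : cutE G (U \ U₁) ⊆ cutE G U := by
    intro e he
    simp only [cutE, Finset.mem_filter] at he ⊢
    obtain ⟨-, hes, x, hx, y, hy, heq⟩ := he
    subst heq
    refine ⟨Finset.mem_univ _, hes, x, (Finset.mem_sdiff.1 hx).1, y, ?_, rfl⟩
    intro hyU
    have hyU₁ : y ∈ U₁ := by
      by_contra h
      exact hy (Finset.mem_sdiff.2 ⟨hyU, h⟩)
    exact hcomp y hyU₁ x hx (G.adj_symm ((SimpleGraph.mem_edgeSet G).1 hes))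
  have he₀B : e₀ ∈ cutE G U :=
    Finset.mem_filter.2 ⟨Finset.mem_univ _, he₀, d.fst, hsub hfst, d.snd, hsnd, rfl⟩
  have he₀A : e₀ ∉ cutE G (U \ U₁) := by
    simp only [cutE, Finset.mem_filter]
    rintro ⟨-, -, x, hx, y, hy, heq⟩
    rw [he₀def, Sym2.eq_iff] at heq
    rcases heq with ⟨h1', h2'⟩ | ⟨h1', h2'⟩
    · exact (Finset.mem_sdiff.1 hx).2 (h1' ▸ hfst)
    · exact hsnd (h2' ▸ (Finset.mem_sdiff.1 hx).1)
  have h2 : ∑ e ∈ cutE G (U \ U₁), w e < ∑ e ∈ cutE G U, w e :=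
    Finset.sum_lt_sum_of_subset hAB he₀B he₀A (hw e₀ he₀)
      (fun j hj _ => (hw j (Finset.mem_filter.1 hj).2.1).le)
  have hW : (U \ U₁).Nonempty := by
    rw [Finset.sdiff_nonempty]
    intro h
    have : U = U₁ := Finset.Subset.antisymm h hsub
    exact hdisc (this ▸ hconn)
  have hWne : U \ U₁ ≠ Finset.univ := fun h => by
    have : a ∈ U \ U₁ := h ▸ Finset.mem_univ a
    exact (Finset.mem_sdiff.1 this).2 ha
  exact ⟨h1, h2, U \ U₁, hW, hWne, h2⟩
end

section
/- Every series parallel graph with at least three vertices contains a vertex of series degree 2, i.e., a vertex adjacent to exactly two distinct vertices. -/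
open scoped Classical

/-- A finite multigraph: vertex names and edge names are natural numbers,
`ends e` gives the (unordered) pair of endpoints of edge `e`. -/
structure MG where
  V : Finset ℕ
  E : Finset ℕ
  ends : ℕ → Sym2 ℕ

namespace MG

/-- Adjacency via at least one edge. -/
def Adj (G : MG) (x y : ℕ) : Prop :=
  x ≠ y ∧ ∃ e ∈ G.E, G.ends e = s(x, y)

/-- Adjacency inside the induced subgraph on `S`. -/
def AdjOn (G : MG) (S : Finset ℕ) (x y : ℕ) : Prop :=
  x ∈ S ∧ y ∈ S ∧ G.Adj x y

/-- The induced subgraph on `S` is connected. -/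
def ConnOn (G : MG) (S : Finset ℕ) : Prop :=
  ∀ x ∈ S, ∀ y ∈ S, Relation.ReflTransGen (G.AdjOn S) x y

/-- The cut `δ(U)`: edges with exactly one endpoint in `U`. -/
noncomputable def cut (G : MG) (U : Finset ℕ) : Finset ℕ :=
  G.E.filter (fun e => ∃ x ∈ U, ∃ y, y ∉ U ∧ G.ends e = s(x, y))

/-- `δ(U)` is a connected sides cut: both sides induce connected subgraphs. -/
def IsCSC (G : MG) (U : Finset ℕ) : Prop :=
  U ⊆ G.V ∧ U.Nonempty ∧ U ≠ G.V ∧ G.ConnOn U ∧ G.ConnOn (G.V \ U)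

/-- The class of parallel edges joining `x` and `y`. -/
noncomputable def parallelClass (G : MG) (x y : ℕ) : Finset ℕ :=
  G.E.filter (fun e => G.ends e = s(x, y))

/-- Contract the whole parallel class between `v` and `u`:
identify `v` with `u` and delete the contracted edges (the would-be loops). -/
noncomputable def contract (G : MG) (v u : ℕ) : MG :=
  ⟨G.V.erase v, G.E.filter (fun e => G.ends e ≠ s(v, u)),
    fun e => (G.ends e).map (fun x => if x = v then u else x)⟩

/-- Contract a single edge `i` with endpoints `a`, `b`: identify `b` with `a`. -/
noncomputable def contractEdge (G : MG) (i a b : ℕ) : MG :=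
  ⟨G.V.erase b, G.E.erase i, fun j => (G.ends j).map (fun x => if x = b then a else x)⟩

/-- The 2-sum of `G₁` (with edge `e₁ = a₁b₁`) and `G₂` (with edge `e₂ = a₂b₂`):
identify `a₂` with `a₁` and `b₂` with `b₁`, and delete `e₁` and `e₂`. -/
noncomputable def twoSum (G₁ G₂ : MG) (e₁ e₂ a₁ b₁ a₂ b₂ : ℕ) : MG :=
  ⟨G₁.V ∪ G₂.V.image (fun x => if x = a₂ then a₁ else if x = b₂ then b₁ else x),
   (G₁.E.erase e₁) ∪ (G₂.E.erase e₂),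
   fun i => if i ∈ G₁.E then G₁.ends i
     else (G₂.ends i).map (fun x => if x = a₂ then a₁ else if x = b₂ then b₁ else x)⟩

/-- Series parallel multigraphs: obtained from a single edge by series and
parallel extensions. -/
inductive IsSP : MG → Prop
  | base (a b e : ℕ) (hab : a ≠ b) : IsSP ⟨{a, b}, {e}, fun _ => s(a, b)⟩
  | series (G : MG) (hG : IsSP G) (i : ℕ) (hi : i ∈ G.E) (x y : ℕ)
      (hxy : G.ends i = s(x, y)) (v f : ℕ) (hv : v ∉ G.V) (hf : f ∉ G.E) :
      IsSP ⟨insert v G.V, insert f G.E,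
        Function.update (Function.update G.ends i s(x, v)) f s(v, y)⟩
  | parallel (G : MG) (hG : IsSP G) (i : ℕ) (hi : i ∈ G.E) (f : ℕ) (hf : f ∉ G.E) :
      IsSP ⟨G.V, insert f G.E, Function.update G.ends f (G.ends i)⟩

end MG

lemma sp_ends (G : MG) (hG : MG.IsSP G) :
    ∀ e ∈ G.E, ∃ x y, x ≠ y ∧ x ∈ G.V ∧ y ∈ G.V ∧ G.ends e = s(x, y) := by
  induction hG with
  | base a b e hab =>
    intro e' _
    exact ⟨a, b, hab, by simp, by simp, rfl⟩
  | series G hG i hi x y hxy v f hv hf IH =>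
    obtain ⟨x', y', hne', hx', hy', he'⟩ := IH i hi
    rw [hxy] at he'
    obtain ⟨hxV, hyV, hxyne⟩ :  x ∈ G.V ∧ y ∈ G.V ∧ x ≠ y := by
      rcases Sym2.eq_iff.mp he' with ⟨h1, h2⟩ | ⟨h1, h2⟩
      · exact ⟨h1 ▸ hx', h2 ▸ hy', h1 ▸ h2 ▸ hne'⟩
      · exact ⟨h1 ▸ hy', h2 ▸ hx', h1 ▸ h2 ▸ hne'.symm⟩
    intro e he
    simp only [Finset.mem_insert] at he
    by_cases hef : e = f
    · subst hef
      refine ⟨v, y, ?_, by simp, by simp [hyV], by simp [Function.update]⟩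
      rintro rfl; exact hv hyV
    · by_cases hei : e = i
      · subst hei
        refine ⟨x, v, ?_, by simp [hxV], by simp, ?_⟩
        · rintro rfl; exact hv hxV
        · simp [Function.update, hef]
      · rcases he with rfl | he
        · exact absurd rfl hef
        · obtain ⟨a, b, hab, ha, hb, hends⟩ := IH e he
          exact ⟨a, b, hab, by simp [ha], by simp [hb],
            by simpa [Function.update, hef, hei] using hends⟩
  | parallel G hG i hi f hf IH =>
    intro e he
    simp only [Finset.mem_insert] at he
    by_cases hef : e = f
    · subst hef
      obtain ⟨a, b, hab, ha, hb, hends⟩ := IH i hi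
      exact ⟨a, b, hab, ha, hb, by simpa [Function.update] using hends⟩
    · rcases he with rfl | he
      · exact absurd rfl hef
      · obtain ⟨a, b, hab, ha, hb, hends⟩ := IH e he
        exact ⟨a, b, hab, ha, hb, by simpa [Function.update, hef] using hends⟩

/-- Every series parallel graph with at least three vertices has a vertex of
series degree 2, i.e. adjacent to exactly two distinct vertices. -/
theorem stmt9 (G : MG) (hG : MG.IsSP G) (hcard : 3 ≤ G.V.card) :
    ∃ v ∈ G.V, ∃ u₀ u₁ : ℕ, u₀ ≠ u₁ ∧
      ∀ x, G.Adj v x ↔ (x = u₀ ∨ x = u₁) := by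
  revert hcard
  induction hG with
  | base a b e hab =>
    intro hcard
    have hcard' : 3 ≤ ({a, b} : Finset ℕ).card := hcard
    have h2 : ({a, b} : Finset ℕ).card ≤ 2 := by
      have := Finset.card_insert_le a ({b} : Finset ℕ)
      simpa using this
    omega
  | series G hG i hi x y hxy v f hv hf IH =>
    intro _
    obtain ⟨x', y', hne', hx', hy', he'⟩ := sp_ends G hG i hi
    rw [hxy] at he'
    obtain ⟨hxV, hyV, hxyne⟩ : x ∈ G.V ∧ y ∈ G.V ∧ x ≠ y := by
      rcases Sym2.eq_iff.mp he' with ⟨h1, h2⟩ | ⟨h1, h2⟩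
      · exact ⟨h1 ▸ hx', h2 ▸ hy', h1 ▸ h2 ▸ hne'⟩
      · exact ⟨h1 ▸ hy', h2 ▸ hx', h1 ▸ h2 ▸ hne'.symm⟩
    have hvx : v ≠ x := by rintro rfl; exact hv hxV
    have hvy : v ≠ y := by rintro rfl; exact hv hyV
    refine ⟨v, by simp, x, y, hxyne, fun z => ?_⟩
    constructor
    · rintro ⟨hvz, e, he, hends⟩
      simp only [Finset.mem_insert] at he
      by_cases hef : e = f
      · subst hef
        simp only [Function.update_self] at hends
        rcases Sym2.eq_iff.mp hends with ⟨_, h2⟩ | ⟨h1, _⟩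
        · exact Or.inr h2.symm
        · exact absurd h1 hvz
      · by_cases hei : e = i
        · have hif : i ≠ f := fun h => hf (h ▸ hi)
          rw [hei] at hends
          simp only [Function.update_of_ne hif, Function.update_self] at hends
          rcases Sym2.eq_iff.mp hends with ⟨h1, _⟩ | ⟨h2, _⟩
          · exact absurd h1 hvx.symm
          · exact Or.inl h2.symm
        · rcases he with rfl | he
          · exact absurd rfl hef
          · obtain ⟨a, b, hab, ha, hb, hends'⟩ := sp_ends G hG e he
            simp only [Function.update_of_ne hef, Function.update_of_ne hei] at hends
            rw [hends'] at hends
            rcases Sym2.eq_iff.mp hends with ⟨h1, _⟩ | ⟨_, h2⟩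
            · exact absurd (h1 ▸ ha) hv
            · exact absurd (h2 ▸ hb) hv
    · have hif : i ≠ f := fun h => hf (h ▸ hi)
      rintro (rfl | rfl)
      · refine ⟨hvx, i, by simp [hi], ?_⟩
        simp [Function.update_of_ne hif, Sym2.eq_swap]
      · exact ⟨hvy, f, by simp, by simp⟩
  | parallel G hG i hi f hf IH =>
    intro hcard
    have hAdj : ∀ a b, MG.Adj ⟨G.V, insert f G.E, Function.update G.ends f (G.ends i)⟩ a b
        ↔ G.Adj a b := by
      intro a b
      constructor
      · rintro ⟨hab, e, he, hends⟩
        simp only [Finset.mem_insert] at he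
        by_cases hef : e = f
        · subst hef
          simp only [Function.update_self] at hends
          exact ⟨hab, i, hi, hends⟩
        · rcases he with rfl | he
          · exact absurd rfl hef
          · simp only [Function.update_of_ne hef] at hends
            exact ⟨hab, e, he, hends⟩
      · rintro ⟨hab, e, he, hends⟩
        have hef : e ≠ f := fun h => hf (h ▸ he)
        exact ⟨hab, e, by simp [he], by simpa [Function.update_of_ne hef] using hends⟩
    obtain ⟨v, hvV, u₀, u₁, hne, hadj⟩ := IH hcard
    exact ⟨v, hvV, u₀, u₁, hne, fun z => (hAdj v z).trans (hadj z)⟩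
end
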